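/- arXiv:2108.04835 — 2 statements merged into one kernel-verified Lean document; each statement's English description precedes it below -/
import Mathlib

section
/- Every chain complex over a field k is isomorphic to a product (equivalently direct sum in each degree) of sphere complexes S^n(V_n) and disk complexes D^n(W_n), where V_n = H_n(X) and W_n = B_{n-1}(X). -/
/-!
Over a field every subspace has a complement, so there are linear retractions `X_n → Z_n` onto
the cycles and `X_{n-1} → B_{n-1}` onto the boundaries. The first, followed by `Z_n → H_n`,
gives a chain map `X → S^n(H_n)`; the second gives a chain map `X → D^n(B_{n-1})`, because a
chain map into a disk is determined by its component in the lower degree. In degree `i` only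
`S^i`, `D^i` and `D^{i+1}` are nonzero, and the resulting map `X_i → B_{i-1} × H_i × B_i` is
bijective: `d` maps `X_i` onto `B_{i-1}` with kernel `Z_i`, the map to `H_i` restricted to `Z_i`
is onto with kernel `B_i`, and the last component is the identity on `B_i`.
-/

open CategoryTheory CategoryTheory.Limits

/-- The sphere chain complex `S^n(V)`: `V` concentrated in degree `n`. -/
noncomputable def sphere {k : Type} [CommRing k] (V : ModuleCat k) (n : ℤ) :
    ChainComplex (ModuleCat k) ℤ :=
  (HomologicalComplex.single (ModuleCat k) (ComplexShape.down ℤ) n).obj V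

/-- Degree-`i` component of the disk complex `D^n(V)`. -/
noncomputable def diskX {k : Type} [CommRing k] (V : ModuleCat k) (n i : ℤ) : ModuleCat k :=
  if i = n ∨ i = n - 1 then V else ModuleCat.of k PUnit

/-- The disk chain complex `D^n(V)`: `V` in degrees `n` and `n-1`, with identity
differential. -/
noncomputable def disk {k : Type} [CommRing k] (V : ModuleCat k) (n : ℤ) :
    ChainComplex (ModuleCat k) ℤ where
  X i := diskX V n i
  d i j :=
    if h : i = n ∧ j = n - 1 then
      eqToHom (show diskX V n i = diskX V n j by
        rw [diskX, diskX, if_pos (Or.inl h.1), if_pos (Or.inr h.2)])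
    else 0
  shape i j hij := by
    rw [dif_neg]
    rintro ⟨h1, h2⟩
    exact hij (by simp only [ComplexShape.down_Rel]; omega)
  d_comp_d' i j l _ _ := by
    by_cases h : i = n ∧ j = n - 1
    · rw [dif_neg (by omega : ¬ (j = n ∧ l = n - 1))]
      simp
    · rw [dif_neg h]
      simp

/-- The canonical projection `D^n(V) ⟶ S^n(V)`, the identity in degree `n`. -/
noncomputable def diskToSphere {k : Type} [CommRing k] (V : ModuleCat k) (n : ℤ) :
    disk V n ⟶ sphere V n :=
  HomologicalComplex.mkHomToSingle
    (eqToHom (show (disk V n).X n = V by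
      simp [disk, diskX]))
    (fun i hi => by
      have : ¬ (i = n ∧ n = n - 1) := by omega
      simp only [disk, dif_neg this, zero_comp]; rfl)

/-- The canonical inclusion `S^n(V) ⟶ D^{n+1}(V)`, the identity in degree `n`. -/
noncomputable def sphereToDisk {k : Type} [CommRing k] (V : ModuleCat k) (n : ℤ) :
    sphere V n ⟶ disk V (n + 1) :=
  HomologicalComplex.mkHomFromSingle
    (eqToHom (show V = (disk V (n+1)).X n by
      simp [disk, diskX]))
    (fun j hj => by
      have : ¬ (n = n + 1 ∧ j = n + 1 - 1) := by omega
      simp only [disk, dif_neg this, comp_zero]; rfl)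

universe v u

namespace LinearMap

variable {R M N P : Type*} [Ring R] [AddCommGroup M] [AddCommGroup N] [AddCommGroup P]
  [Module R M] [Module R N] [Module R P] {f : M →ₗ[R] N} {g : M →ₗ[R] P}

lemma prod_surjective_of_surjective_domRestrict (hf : Function.Surjective f)
    (hg : Function.Surjective (g.domRestrict (ker f))) : Function.Surjective (f.prod g) := by
  rintro ⟨n, p⟩
  obtain ⟨m, rfl⟩ := hf n
  obtain ⟨⟨z, hz⟩, hgz⟩ := hg (p - g m)
  refine ⟨m + z, ?_⟩
  simp only [domRestrict_apply] at hgz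
  simp [mem_ker.1 hz, hgz]

lemma prod_bijective_of_bijective_domRestrict (hf : Function.Surjective f)
    (hg : Function.Bijective (g.domRestrict (ker f))) : Function.Bijective (f.prod g) := by
  refine ⟨?_, prod_surjective_of_surjective_domRestrict hf hg.2⟩
  rw [← ker_eq_bot, ker_prod, eq_bot_iff]
  rintro x ⟨hfx, hgx⟩
  simpa using congrArg Subtype.val (hg.1 (a₁ := ⟨x, hfx⟩) (a₂ := 0) (by simpa using hgx))

lemma bijective_domRestrict_range {d : N →ₗ[R] M} (hs : Function.Surjective (g ∘ₗ d))
    (hk : ker (g ∘ₗ d) ≤ ker d) : Function.Bijective (g.domRestrict (range d)) := by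
  refine ⟨?_, fun p => ?_⟩
  · rw [← ker_eq_bot, eq_bot_iff]
    rintro ⟨_, v, rfl⟩ h
    exact Subtype.ext (hk h)
  · obtain ⟨v, hv⟩ := hs p
    exact ⟨⟨d v, v, rfl⟩, hv⟩

end LinearMap

namespace ModuleCat

variable {R : Type u} [Ring R]

lemma ker_hom_comp_of_isIso {M N P : ModuleCat.{v} R} (f : M ⟶ N) (g : N ⟶ P) [IsIso g] :
    LinearMap.ker (f ≫ g).hom = LinearMap.ker f.hom :=
  LinearMap.ker_comp_of_ker_eq_bot _
    (LinearMap.ker_eq_bot.2 (ConcreteCategory.bijective_of_isIso g).1)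

lemma surjective_comp_of_isIso {M N P : ModuleCat.{v} R} {f : M ⟶ N}
    (hf : Function.Surjective f) (g : N ⟶ P) [IsIso g] : Function.Surjective (f ≫ g) :=
  (ConcreteCategory.bijective_of_isIso g).2.comp hf

lemma isIso_pi_lift_iff {J : Type v} {M : ModuleCat.{v} R} {Z : J → ModuleCat.{v} R}
    (h : ∀ n, M ⟶ Z n) : IsIso (Pi.lift h) ↔ Function.Bijective fun x n => h n x := by
  have : ⇑(Pi.lift h ≫ (piIsoPi Z).hom) = fun x n => h n x := by
    ext x n
    exact (ConcreteCategory.congr_hom (piIsoPi_hom_ker_subtype Z n) (Pi.lift h x)).trans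
      (ConcreteCategory.congr_hom (Pi.lift_π h n) x)
  rw [← isIso_comp_right_iff _ (piIsoPi Z).hom, ConcreteCategory.isIso_iff_bijective, this]

lemma bijective_biprod_fst_snd (M N : ModuleCat.{v} R) :
    Function.Bijective fun z : ↑(M ⊞ N) =>
      ((biprod.fst : M ⊞ N ⟶ M) z, (biprod.snd : M ⊞ N ⟶ N) z) := by
  convert ConcreteCategory.bijective_of_isIso (biprodIsoProd M N).hom with z
  rw [← Iso.hom_inv_id_apply (biprodIsoProd M N) z]
  simp only [biprodIsoProd_inv_comp_fst_apply, Iso.inv_hom_id_apply]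
  rfl

instance isSplitMono_of_mono {K : Type u} [DivisionRing K] {M N : ModuleCat.{v} K} (f : M ⟶ N)
    [Mono f] : IsSplitMono f := by
  obtain ⟨g, hg⟩ := f.hom.exists_leftInverse_of_injective
    (LinearMap.ker_eq_bot.2 ((mono_iff_injective f).1 ‹_›))
  exact IsSplitMono.mk' ⟨ofHom g, by ext x; exact LinearMap.congr_fun hg x⟩

end ModuleCat

namespace HomologicalComplex

variable {R : Type u} [Ring R] {ι : Type*} {c : ComplexShape ι}

lemma bijective_biprod_fst_snd_f (K L : HomologicalComplex (ModuleCat.{v} R) c) (i : ι) :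
    Function.Bijective fun z : (K ⊞ L).X i =>
      ((biprod.fst : K ⊞ L ⟶ K).f i z, (biprod.snd : K ⊞ L ⟶ L).f i z) := by
  convert (ModuleCat.bijective_biprod_fst_snd _ _).comp
    (ConcreteCategory.bijective_of_isIso (biprodXIso K L i).hom) with z
  all_goals simp [← ConcreteCategory.comp_apply]

lemma isIso_f_pi_lift_biprod_lift_iff {J : Type v} {X : HomologicalComplex (ModuleCat.{v} R) c}
    {S D : J → HomologicalComplex (ModuleCat.{v} R) c}
    (a : ∀ n, X ⟶ S n) (b : ∀ n, X ⟶ D n) (i : ι) :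
    IsIso ((Pi.lift fun n => biprod.lift (a n) (b n)).f i) ↔
      Function.Bijective fun (x : X.X i) (n : J) => ((a n).f i x, (b n).f i x) := by
  have hcomp : (Pi.lift fun n => biprod.lift (a n) (b n)).f i ≫
      piComparison (eval _ c i) (fun n => S n ⊞ D n) =
      Pi.lift fun n => (biprod.lift (a n) (b n)).f i :=
    map_lift_piComparison (eval _ c i) (fun n => S n ⊞ D n) X _
  have hiso : IsIso ((Pi.lift fun n => biprod.lift (a n) (b n)).f i) ↔
      IsIso (Pi.lift fun n => (biprod.lift (a n) (b n)).f i) := by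
    rw [← hcomp]
    exact (isIso_comp_right_iff _
      (piComparison (eval (ModuleCat.{v} R) c i) fun n => S n ⊞ D n)).symm
  let e n := Equiv.ofBijective _ (bijective_biprod_fst_snd_f (S n) (D n) i)
  rw [hiso, ModuleCat.isIso_pi_lift_iff, ← (Equiv.piCongrRight e).comp_bijective]
  convert Iff.rfl with x n <;>
    simp [e, ← ConcreteCategory.comp_apply, ← comp_f]

end HomologicalComplex

namespace ChainComplex

variable {R : Type u} [Ring R] (X : ChainComplex (ModuleCat.{v} R) ℤ) {n : ℤ}

lemma exists_iCycles_apply_eq {x : X.X n} (hx : X.d n (n - 1) x = 0) :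
    ∃ w, X.iCycles n w = x :=
  (ShortComplex.moduleCat_exact_iff _).1
    (ShortComplex.exact_of_f_is_kernel (.mk (X.iCycles n) (X.d n (n - 1)) (by simp))
      (X.cyclesIsKernel n (n - 1) (by simp))) x hx

lemma exists_toCycles_apply_eq {w : X.cycles n} (hw : X.homologyπ n w = 0) :
    ∃ v, X.toCycles (n + 1) n v = w :=
  (ShortComplex.moduleCat_exact_iff _).1
    (ShortComplex.exact_of_g_is_cokernel (.mk (X.toCycles (n + 1) n) (X.homologyπ n) (by simp))
      (X.homologyIsCokernel (n + 1) n (by simp))) w hw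

end ChainComplex

section Disk

variable {k : Type} [CommRing k] {X : ChainComplex (ModuleCat k) ℤ} {V : ModuleCat k} {n i : ℤ}

lemma disk_X_eq (h : i = n ∨ i = n - 1) : (disk V n).X i = V := by
  change diskX V n i = V
  rw [diskX, if_pos h]

lemma subsingleton_disk_X (h : ¬(i = n ∨ i = n - 1)) : Subsingleton ((disk V n).X i) := by
  change Subsingleton (diskX V n i)
  rw [diskX, if_neg h]
  infer_instance

lemma subsingleton_sphere_X (h : i ≠ n) : Subsingleton ((sphere V n).X i) :=
  ModuleCat.subsingleton_of_isZero (HomologicalComplex.isZero_single_obj_X _ _ _ _ h)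

noncomputable def diskLift (b : X.X (n - 1) ⟶ V) : X ⟶ disk V n where
  f j :=
    if h : j = n then X.d j (n - 1) ≫ b ≫ eqToHom (disk_X_eq (Or.inl h)).symm
    else if h' : j = n - 1 then
      (X.XIsoOfEq h').hom ≫ b ≫ eqToHom (disk_X_eq (Or.inr h')).symm
    else 0
  comm' i j hij := by
    change j + 1 = i at hij
    by_cases hj : j = n - 1
    · subst hj
      obtain rfl : i = n := by omega
      simp only [disk, ↓reduceDIte, and_self, Category.assoc, sub_eq_self, one_ne_zero,
        HomologicalComplex.XIsoOfEq_rfl, Iso.refl_hom, Category.id_comp]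
      erw [eqToHom_trans]
    · by_cases hjn : j = n
      · subst hjn
        simp only [disk, show i ≠ j by omega, show i ≠ j - 1 by omega, ↓reduceDIte, false_and,
          HomologicalComplex.d_comp_d_assoc, zero_comp]
        exact zero_comp
      · simp only [disk, hj, hjn, and_false, ↓reduceDIte, comp_zero]
        exact comp_zero.symm

lemma diskLift_f_self (b : X.X (n - 1) ⟶ V) :
    (diskLift b).f n = X.d n (n - 1) ≫ b ≫ eqToHom (disk_X_eq (Or.inl rfl)).symm :=
  dif_pos rfl

lemma diskLift_f_of_eq (b : X.X (n - 1) ⟶ V) (h : i = n - 1) :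
    (diskLift b).f i =
      (X.XIsoOfEq h).hom ≫ b ≫ eqToHom (disk_X_eq (Or.inr h)).symm :=
  (dif_neg (show i ≠ n by omega)).trans (dif_pos h)

end Disk

namespace ChainComplex

variable {k : Type} [Field k] (X : ChainComplex (ModuleCat k) ℤ) (n : ℤ)

/-- `B_{n-1}(X)`, the image of `d : X_n → X_{n-1}`. -/
abbrev rangeD : ModuleCat k := ModuleCat.of k (LinearMap.range (X.d n (n - 1)).hom)

noncomputable def rangeDι : X.rangeD n ⟶ X.X (n - 1) :=
  ModuleCat.ofHom (LinearMap.range (X.d n (n - 1)).hom).subtype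

instance : Mono (X.rangeDι n) :=
  (ModuleCat.mono_iff_injective _).2 Subtype.val_injective

lemma d_comp_retraction_rangeDι :
    X.d n (n - 1) ≫ retraction (X.rangeDι n) =
      ModuleCat.ofHom (X.d n (n - 1)).hom.rangeRestrict := by
  have : X.d n (n - 1) = ModuleCat.ofHom (X.d n (n - 1)).hom.rangeRestrict ≫ X.rangeDι n := rfl
  conv_lhs => rw [this]
  rw [Category.assoc, IsSplitMono.id, Category.comp_id]

noncomputable def toHomology : X.X n ⟶ X.homology n :=
  retraction (X.iCycles n) ≫ X.homologyπ n

lemma iCycles_comp_toHomology : X.iCycles n ≫ X.toHomology n = X.homologyπ n :=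
  IsSplitMono.id_assoc _ _

lemma d_comp_toHomology (m : ℤ) : X.d m n ≫ X.toHomology n = 0 := by
  rw [← X.toCycles_i, Category.assoc, iCycles_comp_toHomology,
    HomologicalComplex.toCycles_comp_homologyπ]

variable {X n}

lemma exists_toHomology_eq (h : X.homology n) :
    ∃ x, X.d n (n - 1) x = 0 ∧ X.toHomology n x = h := by
  obtain ⟨w, rfl⟩ := (ModuleCat.epi_iff_surjective (X.homologyπ n)).1 inferInstance h
  exact ⟨X.iCycles n w, ConcreteCategory.congr_hom (X.iCycles_d n (n - 1)) w,
    ConcreteCategory.congr_hom (X.iCycles_comp_toHomology n) w⟩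

lemma mem_range_of_toHomology_eq_zero {x : X.X n} (hd : X.d n (n - 1) x = 0)
    (h : X.toHomology n x = 0) : x ∈ LinearMap.range (X.d (n + 1) n).hom := by
  obtain ⟨w, rfl⟩ := X.exists_iCycles_apply_eq hd
  rw [← ConcreteCategory.comp_apply, iCycles_comp_toHomology] at h
  obtain ⟨v, rfl⟩ := X.exists_toCycles_apply_eq h
  exact ⟨v, (ConcreteCategory.congr_hom (X.toCycles_i (n + 1) n) v).symm⟩

variable (X n)

noncomputable def toSphere : X ⟶ sphere (X.homology n) n :=
  HomologicalComplex.mkHomToSingle (X.toHomology n) fun i _ => X.d_comp_toHomology n i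

noncomputable def toDisk : X ⟶ disk (X.rangeD n) n :=
  diskLift (retraction (X.rangeDι n))

lemma toSphere_f_self :
    (X.toSphere n).f n =
      X.toHomology n ≫ (HomologicalComplex.singleObjXSelf _ n (X.homology n)).inv :=
  HomologicalComplex.mkHomToSingle_f _ _

lemma toDisk_f_self :
    (X.toDisk n).f n = ModuleCat.ofHom (X.d n (n - 1)).hom.rangeRestrict ≫
      eqToHom (disk_X_eq (Or.inl rfl)).symm := by
  rw [toDisk, diskLift_f_self, ← Category.assoc, d_comp_retraction_rangeDι]

lemma d_comp_toDisk_f_pred :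
    X.d (n + 1) n ≫ (X.toDisk (n + 1)).f n =
      ModuleCat.ofHom (X.d (n + 1) (n + 1 - 1)).hom.rangeRestrict ≫
        eqToHom (disk_X_eq (Or.inr (by omega))).symm := by
  rw [toDisk, diskLift_f_of_eq _ (by omega), HomologicalComplex.d_comp_XIsoOfEq_hom_assoc,
    ← Category.assoc, d_comp_retraction_rangeDι]

lemma surjective_toDisk_f_self : Function.Surjective ((X.toDisk n).f n) := by
  rw [toDisk_f_self]
  exact ModuleCat.surjective_comp_of_isIso (X.d n (n - 1)).hom.surjective_rangeRestrict _

lemma ker_toDisk_f_self :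
    LinearMap.ker ((X.toDisk n).f n).hom = LinearMap.ker (X.d n (n - 1)).hom := by
  rw [toDisk_f_self, ModuleCat.ker_hom_comp_of_isIso]
  exact LinearMap.ker_rangeRestrict _

lemma ker_toSphere_f_self :
    LinearMap.ker ((X.toSphere n).f n).hom = LinearMap.ker (X.toHomology n).hom := by
  rw [toSphere_f_self]
  exact ModuleCat.ker_hom_comp_of_isIso _
    (HomologicalComplex.singleObjXSelf (ComplexShape.down ℤ) n (X.homology n)).inv

lemma surjective_toSphere_f_self_domRestrict :
    Function.Surjective
      (((X.toSphere n).f n).hom.domRestrict (LinearMap.ker (X.d n (n - 1)).hom)) := by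
  intro y
  obtain ⟨x, hx, hxy⟩ := exists_toHomology_eq
    ((HomologicalComplex.singleObjXSelf (ComplexShape.down ℤ) n (X.homology n)).hom y)
  refine ⟨⟨x, hx⟩, ?_⟩
  change (X.toSphere n).f n x = y
  rw [toSphere_f_self]
  erw [ConcreteCategory.comp_apply, hxy, Iso.hom_inv_id_apply]

lemma ker_toDisk_f_self_prod_toSphere_f_self :
    LinearMap.ker (((X.toDisk n).f n).hom.prod ((X.toSphere n).f n).hom) =
      LinearMap.range (X.d (n + 1) n).hom := by
  rw [LinearMap.ker_prod, ker_toDisk_f_self, ker_toSphere_f_self]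
  ext x
  simp only [Submodule.mem_inf, LinearMap.mem_ker]
  constructor
  · exact fun ⟨hd, h⟩ => mem_range_of_toHomology_eq_zero hd h
  · rintro ⟨v, rfl⟩
    exact ⟨ConcreteCategory.congr_hom (X.d_comp_d (n + 1) n (n - 1)) v,
      ConcreteCategory.congr_hom (X.d_comp_toHomology n (n + 1)) v⟩

lemma bijective_toDisk_f_pred_domRestrict :
    Function.Bijective
      (((X.toDisk (n + 1)).f n).hom.domRestrict (LinearMap.range (X.d (n + 1) n).hom)) := by
  have h := congrArg ModuleCat.Hom.hom (X.d_comp_toDisk_f_pred n)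
  rw [ModuleCat.hom_comp] at h
  apply LinearMap.bijective_domRestrict_range
  · rw [h]
    exact ModuleCat.surjective_comp_of_isIso (X.d _ _).hom.surjective_rangeRestrict _
  · rw [h, ModuleCat.ker_hom_comp_of_isIso, ModuleCat.hom_ofHom, LinearMap.ker_rangeRestrict,
      ← X.d_comp_XIsoOfEq_hom (by omega : n = n + 1 - 1), ModuleCat.ker_hom_comp_of_isIso]

lemma bijective_toSphere_toDisk_f (i : ℤ) :
    Function.Bijective fun (x : X.X i) (n : ℤ) => ((X.toSphere n).f i x, (X.toDisk n).f i x) := by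
  have hΦ := LinearMap.prod_bijective_of_bijective_domRestrict
    (LinearMap.prod_surjective_of_surjective_domRestrict (X.surjective_toDisk_f_self i)
      (by rw [ker_toDisk_f_self]; exact X.surjective_toSphere_f_self_domRestrict i))
    (by rw [ker_toDisk_f_self_prod_toSphere_f_self]; exact X.bijective_toDisk_f_pred_domRestrict i)
  refine ⟨fun x y hxy => hΦ.1 ?_, fun y => ?_⟩
  · have hi := congrFun hxy i
    have hi1 := congrFun hxy (i + 1)
    simp only [Prod.mk.injEq] at hi hi1
    simp [hi.1, hi.2, hi1.2]
  · obtain ⟨x, hx⟩ := hΦ.2 (((y i).2, (y i).1), (y (i + 1)).2)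
    simp only [LinearMap.prod_apply, Function.prod, Prod.mk.injEq] at hx
    refine ⟨x, funext fun n => ?_⟩
    rcases eq_or_ne n i with rfl | hn
    · exact Prod.ext hx.1.2 hx.1.1
    rcases eq_or_ne n (i + 1) with rfl | hn'
    · have := subsingleton_sphere_X (V := X.homology (i + 1)) (show i ≠ i + 1 by omega)
      exact Prod.ext (Subsingleton.elim _ _) hx.2
    · have := subsingleton_sphere_X (V := X.homology n) hn.symm
      have := subsingleton_disk_X (V := X.rangeD n) (show ¬(i = n ∨ i = n - 1) by omega)
      exact Subsingleton.elim _ _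

end ChainComplex

/-- Over a field, every chain complex is isomorphic to a product of spheres and disks,
with `V_n = H_n(X)` and `W_n = B_{n-1}(X) = im(d_n)`. -/
theorem chainComplex_iso_prod_spheres_disks (k : Type) [Field k]
    (X : ChainComplex (ModuleCat k) ℤ) :
    Nonempty (X ≅ ∏ᶜ (fun n : ℤ =>
      (sphere (X.homology n) n) ⊞
        (disk (ModuleCat.of k (LinearMap.range (X.d n (n - 1)).hom)) n))) := by
  let f : X ⟶ ∏ᶜ _ := Pi.lift fun n => biprod.lift (X.toSphere n) (X.toDisk n)
  have : ∀ i, IsIso (f.f i) := fun i =>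
    (HomologicalComplex.isIso_f_pi_lift_biprod_lift_iff _ _ i).2 (X.bijective_toSphere_toDisk_f i)
  have : IsIso f := HomologicalComplex.Hom.isIso_of_components f
  exact ⟨asIso f⟩
end

section
/- The codomains S^n of the maps D^n → S^n are not cosmall in chain complexes over k: for the tower Y_k = S^n with zero transition maps, the canonical map colim_k Hom(Y_k, S^n) → Hom(lim_k Y_k, S^n) is not a bijection; equivalently, the natural map ⊕_{k≥0} k → (∏_{k≥0} k)* is not bijective. -/
/-- The natural map `⊕_{i ∈ ℕ} k ⟶ (∏_{i ∈ ℕ} k)*`, sending the `i`-th basis vector to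
the `i`-th coordinate projection, is not a bijection.  (This is the concrete form of the
failure of cosmallness of the spheres `S^n` in chain complexes over `k`: for the tower
`Y_k = S^n` with zero transition maps, `colim_k Hom(Y_k, S^n) → Hom(lim_k Y_k, S^n)` is
this map, hence not a bijection.) -/
theorem directSum_to_dual_of_pi_not_bijective (k : Type) [Field k] :
    ¬ Function.Bijective
      (Finsupp.lsum k
        (fun i : ℕ => LinearMap.toSpanSingleton k (Module.Dual k (ℕ → k))
          (LinearMap.proj i)) : (ℕ →₀ k) →ₗ[k] Module.Dual k (ℕ → k)) := by
  rintro ⟨-, hsurj⟩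
  -- the submodule of finitely supported sequences
  set S : Submodule k (ℕ → k) :=
    LinearMap.range (Finsupp.lcoeFun (α := ℕ) (M := k) (R := k)) with hS
  -- the all-ones sequence is not finitely supported
  have hv : (fun _ => (1 : k)) ∉ S := by
    rintro ⟨f, hf⟩
    refine Set.infinite_univ (α := ℕ) (Set.Finite.subset f.finite_support ?_)
    intro i _
    have : f i = 1 := congrFun hf i
    simp [Function.mem_support, this]
  have hx : (Submodule.Quotient.mk (fun _ => (1 : k)) : (ℕ → k) ⧸ S) ≠ 0 := by
    simpa [Submodule.Quotient.mk_eq_zero] using hv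
  obtain ⟨g, hg⟩ := not_forall.mp
    (fun h => hx ((Module.forall_dual_apply_eq_zero_iff k _).mp h))
  obtain ⟨c, hc⟩ := hsurj (g ∘ₗ S.mkQ)
  -- evaluating at `Pi.single j 1` shows `c = 0`
  have hc0 : c = 0 := by
    ext j
    have h1 : (Finsupp.lsum k
        (fun i : ℕ => LinearMap.toSpanSingleton k (Module.Dual k (ℕ → k))
          (LinearMap.proj i)) c) (Pi.single j 1) = c j := by
      simp only [Finsupp.lsum_apply, Finsupp.sum, LinearMap.coe_sum, Finset.sum_apply,
        LinearMap.toSpanSingleton_apply, LinearMap.smul_apply, LinearMap.proj_apply,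
        Pi.single_apply, smul_eq_mul, mul_ite, mul_one, mul_zero]
      rw [Finset.sum_ite_eq' c.support j (fun x => c x)]
      split
      · rfl
      · exact (Finsupp.notMem_support_iff.mp (by assumption)).symm
    have h2 : (g ∘ₗ S.mkQ) (Pi.single j 1) = 0 := by
      have hmem : (Pi.single j 1 : ℕ → k) ∈ S := ⟨Finsupp.single j 1, by
        ext i
        by_cases h : i = j
        · subst h; simp
        · simp [Finsupp.single_apply, Pi.single_apply, h, Ne.symm h]⟩
      simp [LinearMap.comp_apply, (Submodule.Quotient.mk_eq_zero S).mpr hmem]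
    rw [hc] at h1
    rw [h2] at h1
    simpa using h1.symm
  rw [hc0, map_zero] at hc
  exact hg (by simpa using (congrFun (congrArg DFunLike.coe hc.symm) (fun _ => (1 : k))))
end
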